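/- Let μ be a finite Borel measure on the unit sphere S^{n-1} with finite support {u_1, ..., u_m}. Then μ is uniquely determined among all finite Borel measures on S^{n-1} by its moments up to order m; that is, if ν is a finite Borel measure on S^{n-1} whose moments up to order m coincide with those of μ, then ν = μ. -/

import Mathlib

/-!
For `v` on the sphere, `1 - ⟪x, v⟫` is a polynomial of degree one that is nonnegative on the
sphere and vanishes only at `x = v`. Its product over the support `S` of `μ` has degree at most
`m` and vanishes on `S`, so its `μ`-integral is zero; by the moment hypothesis so is its
`ν`-integral, hence `ν` is concentrated on `S`. Omitting the factor of a point `v ∈ S` gives a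
polynomial that vanishes on `S` except at `v`, and comparing its two integrals gives
`ν {v} = μ {v}`.
-/

open MeasureTheory Metric Real Filter
open scoped InnerProductSpace ENNReal NNReal Topology

noncomputable section

/-- `ℝ^n` as a Euclidean space. -/
abbrev En (n : ℕ) := EuclideanSpace ℝ (Fin n)

/-- The unit sphere `S^{n-1}` in `ℝ^n`. -/
abbrev Sph (n : ℕ) : Set (En n) := Metric.sphere 0 1

/-- The moment of a Borel measure on the sphere corresponding to the
multi-index `i : Fin n → ℕ`, i.e. `∫ u₁^{i₁} ⋯ uₙ^{iₙ} μ(du)`. -/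
def sphMoment {n : ℕ} (μ : Measure (Sph n)) (i : Fin n → ℕ) : ℝ :=
  ∫ u, ∏ j, ((u : En n) j) ^ (i j) ∂μ

namespace MeasureTheory

variable {α : Type*} [MeasurableSpace α]

lemma measure_compl_eq_zero_of_integral_eq_zero {ρ : Measure α} {f : α → ℝ} {s : Set α}
    (hf : Integrable f ρ) (hf_nonneg : 0 ≤ f) (hf_ne : ∀ x ∉ s, f x ≠ 0)
    (h : ∫ x, f x ∂ρ = 0) : ρ sᶜ = 0 := by
  have hae : f =ᵐ[ρ] 0 := (integral_eq_zero_iff_of_nonneg hf_nonneg hf).mp h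
  exact measure_mono_null (fun x hx => hf_ne x hx) (ae_iff.mp hae)

variable [MeasurableSingletonClass α]

lemma Measure.restrict_finset_eq_of_measure_singleton_eq {μ ν : Measure α} (S : Finset α)
    (h : ∀ x ∈ S, μ {x} = ν {x}) : μ.restrict S = ν.restrict S := by
  classical
  ext A hA
  have hA_inter : A ∩ S = ↑(S.filter (· ∈ A)) := by ext; simp [and_comm]
  rw [Measure.restrict_apply hA, Measure.restrict_apply hA, hA_inter,
    ← sum_measure_singleton, ← sum_measure_singleton]
  exact Finset.sum_congr rfl fun x hx => h x (Finset.mem_filter.mp hx).1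

lemma Measure.ext_of_measure_compl_finset_eq_zero {μ ν : Measure α} (S : Finset α)
    (hμ : μ (↑S)ᶜ = 0) (hν : ν (↑S)ᶜ = 0) (h : ∀ x ∈ S, μ {x} = ν {x}) : μ = ν := by
  rw [← Measure.restrict_eq_self_of_ae_mem (μ := μ) (ae_iff.mpr hμ),
    ← Measure.restrict_eq_self_of_ae_mem (μ := ν) (ae_iff.mpr hν)]
  exact Measure.restrict_finset_eq_of_measure_singleton_eq S h

lemma integral_eq_sum_of_measure_compl_finset_eq_zero {ρ : Measure α} [IsFiniteMeasure ρ]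
    (S : Finset α) (hρ : ρ (↑S)ᶜ = 0) (f : α → ℝ) :
    ∫ x, f x ∂ρ = ∑ x ∈ S, ρ.real {x} * f x := by
  conv_lhs => rw [← Measure.restrict_eq_self_of_ae_mem (μ := ρ) (ae_iff.mpr hρ)]
  exact setIntegral_finset S (IntegrableOn.finset (μ := ρ) (f := f))

end MeasureTheory

section SpherePolynomials

open MvPolynomial

variable {n : ℕ}

def sphEval (q : MvPolynomial (Fin n) ℝ) (x : Sph n) : ℝ :=
  eval (fun j => (x : En n) j) q

lemma continuous_sphEval (q : MvPolynomial (Fin n) ℝ) : Continuous (sphEval q) :=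
  q.continuous_eval.comp <| continuous_pi fun j =>
    (EuclideanSpace.proj j).continuous.comp continuous_subtype_val

lemma integral_sphEval (ρ : Measure (Sph n)) [IsFiniteMeasure ρ] (q : MvPolynomial (Fin n) ℝ) :
    ∫ x, sphEval q x ∂ρ = ∑ d ∈ q.support, q.coeff d * sphMoment ρ d := by
  simp only [sphEval, eval_eq']
  rw [integral_finsetSum]
  · exact Finset.sum_congr rfl fun d _ => integral_const_mul _ _
  · intro d _
    refine Continuous.integrable_of_hasCompactSupport ?_ (.of_compactSpace _)
    exact continuous_const.mul <| continuous_finsetProd _ fun j _ =>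
      ((EuclideanSpace.proj j).continuous.comp continuous_subtype_val).pow _

lemma integral_sphEval_eq_of_sphMoment_eq {m : ℕ} (μ ν : Measure (Sph n)) [IsFiniteMeasure μ]
    [IsFiniteMeasure ν] (hmom : ∀ i : Fin n → ℕ, (∑ j, i j) ≤ m → sphMoment ν i = sphMoment μ i)
    (q : MvPolynomial (Fin n) ℝ) (hq : q.totalDegree ≤ m) :
    ∫ x, sphEval q x ∂ν = ∫ x, sphEval q x ∂μ := by
  rw [integral_sphEval, integral_sphEval]
  refine Finset.sum_congr rfl fun d hd => ?_
  rw [hmom]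
  calc (∑ j, d j) = d.sum fun _ e => e := (Finsupp.sum_fintype d (fun _ e => e) fun _ => rfl).symm
    _ ≤ q.totalDegree := le_totalDegree hd
    _ ≤ m := hq

def oneSubInner (v : En n) : MvPolynomial (Fin n) ℝ :=
  1 - ∑ i, C (v i) * X i

lemma totalDegree_oneSubInner_le (v : En n) : (oneSubInner v).totalDegree ≤ 1 := by
  refine (totalDegree_sub _ _).trans (max_le ?_ ?_)
  · simp
  · refine (totalDegree_finsetSum _ _).trans (Finset.sup_le fun i _ => ?_)
    refine (totalDegree_mul _ _).trans ?_
    simp [totalDegree_C, totalDegree_X]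

lemma sphEval_oneSubInner (v : En n) (x : Sph n) :
    sphEval (oneSubInner v) x = 1 - ⟪(x : En n), v⟫_ℝ := by
  simp [sphEval, oneSubInner, PiLp.inner_apply, mul_comm]

lemma sphEval_oneSubInner_nonneg (v x : Sph n) : 0 ≤ sphEval (oneSubInner v) x := by
  have := real_inner_le_norm (x : En n) (v : En n)
  rw [mem_sphere_zero_iff_norm.mp x.2, mem_sphere_zero_iff_norm.mp v.2, one_mul] at this
  rw [sphEval_oneSubInner]
  linarith

lemma sphEval_oneSubInner_eq_zero_iff (v x : Sph n) : sphEval (oneSubInner v) x = 0 ↔ x = v := by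
  rw [sphEval_oneSubInner, sub_eq_zero, eq_comm, inner_eq_one_iff_of_norm_eq_one
    (mem_sphere_zero_iff_norm.mp x.2) (mem_sphere_zero_iff_norm.mp v.2), Subtype.ext_iff]

def sphVanishing (S : Finset (Sph n)) : MvPolynomial (Fin n) ℝ :=
  ∏ v ∈ S, oneSubInner (v : En n)

lemma totalDegree_sphVanishing_le (S : Finset (Sph n)) :
    (sphVanishing S).totalDegree ≤ S.card :=
  calc (sphVanishing S).totalDegree
      ≤ ∑ v ∈ S, (oneSubInner (v : En n)).totalDegree := totalDegree_finsetProd _ _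
    _ ≤ ∑ _v ∈ S, 1 := Finset.sum_le_sum fun v _ => totalDegree_oneSubInner_le _
    _ = S.card := by simp

lemma sphEval_sphVanishing (S : Finset (Sph n)) (x : Sph n) :
    sphEval (sphVanishing S) x = ∏ v ∈ S, sphEval (oneSubInner v) x :=
  map_prod _ _ _

lemma sphEval_sphVanishing_nonneg (S : Finset (Sph n)) (x : Sph n) :
    0 ≤ sphEval (sphVanishing S) x := by
  rw [sphEval_sphVanishing]
  exact Finset.prod_nonneg fun v _ => sphEval_oneSubInner_nonneg v x

lemma sphEval_sphVanishing_eq_zero_iff (S : Finset (Sph n)) (x : Sph n) :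
    sphEval (sphVanishing S) x = 0 ↔ x ∈ S := by
  simp [sphEval_sphVanishing, Finset.prod_eq_zero_iff, sphEval_oneSubInner_eq_zero_iff]

end SpherePolynomials

lemma measure_singleton_eq_of_integral_sphVanishing_erase_eq {n : ℕ} {μ ν : Measure (Sph n)}
    [IsFiniteMeasure μ] [IsFiniteMeasure ν] {S : Finset (Sph n)} (hμ : μ (↑S)ᶜ = 0)
    (hν : ν (↑S)ᶜ = 0) {v : Sph n} (hv : v ∈ S)
    (h : ∫ x, sphEval (sphVanishing (S.erase v)) x ∂ν
      = ∫ x, sphEval (sphVanishing (S.erase v)) x ∂μ) :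
    ν {v} = μ {v} := by
  have hvanish : ∀ w ∈ S, w ≠ v → sphEval (sphVanishing (S.erase v)) w = 0 := fun w hw hwv =>
    (sphEval_sphVanishing_eq_zero_iff _ w).mpr (Finset.mem_erase.mpr ⟨hwv, hw⟩)
  have hpeak : sphEval (sphVanishing (S.erase v)) v ≠ 0 := by
    simp [sphEval_sphVanishing_eq_zero_iff]
  rw [integral_eq_sum_of_measure_compl_finset_eq_zero S hν,
    integral_eq_sum_of_measure_compl_finset_eq_zero S hμ,
    Finset.sum_eq_single_of_mem v hv fun w hw hwv => by rw [hvanish w hw hwv, mul_zero],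
    Finset.sum_eq_single_of_mem v hv fun w hw hwv => by rw [hvanish w hw hwv, mul_zero]] at h
  exact (measureReal_eq_measureReal_iff).mp (mul_right_cancel₀ hpeak h)

theorem stmt0 {n : ℕ} (m : ℕ) (u : Fin m → Sph n)
    (α : Fin m → ℝ≥0) (μ : Measure (Sph n))
    (hμ : μ = ∑ j, (α j : ℝ≥0∞) • Measure.dirac (u j))
    (ν : Measure (Sph n)) [IsFiniteMeasure ν]
    (hmom : ∀ i : Fin n → ℕ, (∑ j, i j) ≤ m → sphMoment ν i = sphMoment μ i) :
    ν = μ := by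
  classical
  have : IsFiniteMeasure μ := ⟨by simp [hμ, ENNReal.sum_lt_top]⟩
  set S := Finset.univ.image u
  have hmomS : ∀ T ⊆ S,
      ∫ x, sphEval (sphVanishing T) x ∂ν = ∫ x, sphEval (sphVanishing T) x ∂μ :=
    fun T hT => integral_sphEval_eq_of_sphMoment_eq μ ν hmom _ <|
      (totalDegree_sphVanishing_le T).trans <| (Finset.card_le_card hT).trans <|
        Finset.card_image_le.trans (by simp)
  have hμS : μ (↑S)ᶜ = 0 := by simp [hμ, S]
  have hνS : ν (↑S)ᶜ = 0 := by
    refine measure_compl_eq_zero_of_integral_eq_zero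
      ((continuous_sphEval _).integrable_of_hasCompactSupport (.of_compactSpace _))
      (sphEval_sphVanishing_nonneg S)
      (fun x hx => by simpa [sphEval_sphVanishing_eq_zero_iff] using hx) ?_
    rw [hmomS S subset_rfl, integral_eq_sum_of_measure_compl_finset_eq_zero S hμS]
    exact Finset.sum_eq_zero fun x hx => by
      rw [(sphEval_sphVanishing_eq_zero_iff S x).mpr hx, mul_zero]
  exact Measure.ext_of_measure_compl_finset_eq_zero S hνS hμS fun v hv =>
    measure_singleton_eq_of_integral_sphVanishing_erase_eq hμS hνS hv
      (hmomS _ (Finset.erase_subset v S))
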